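/- arXiv:2410.10061 — 2 statements merged into one kernel-verified Lean document; each statement's English description precedes it below -/
import Mathlib

section
/- Let s : A → B be a surjective homomorphism of abelian groups whose kernel consists of torsion elements. Then s restricts to a surjective homomorphism tor(A) → tor(B) with kernel equal to ker(s); in particular, tor(B) is isomorphic to tor(A)/ker(s). -/
theorem stmt_2 {A B : Type*} [AddCommGroup A] [AddCommGroup B] (s : A →+ B)
    (hsurj : Function.Surjective s)
    (hker : ∀ a ∈ s.ker, IsOfFinAddOrder a) :
    ∃ t : AddCommGroup.torsion A →+ AddCommGroup.torsion B,
      (∀ a : AddCommGroup.torsion A, (t a : B) = s a) ∧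
      Function.Surjective t ∧
      (∀ a : AddCommGroup.torsion A, t a = 0 ↔ s a = 0) ∧
      Nonempty ((AddCommGroup.torsion A ⧸ t.ker) ≃+ AddCommGroup.torsion B) := by
  have hmap : ∀ a : AddCommGroup.torsion A, s a ∈ AddCommGroup.torsion B := by
    intro a
    exact s.isOfFinAddOrder a.2
  refine ⟨{ toFun := fun a => ⟨s a, hmap a⟩,
            map_zero' := by ext; simp,
            map_add' := by intro a b; ext; simp }, fun a => rfl, ?_, ?_, ?_⟩
  · intro b
    obtain ⟨a, ha⟩ := hsurj b
    obtain ⟨n, hn, hnb⟩ := ((isOfFinAddOrder_iff_nsmul_eq_zero).mp b.2)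
    have hker' : n • a ∈ s.ker := by
      simp only [AddMonoidHom.mem_ker, map_nsmul, ha]
      exact_mod_cast hnb
    have hfin : IsOfFinAddOrder a := by
      have := hker _ hker'
      obtain ⟨m, hm, hma⟩ := isOfFinAddOrder_iff_nsmul_eq_zero.mp this
      refine isOfFinAddOrder_iff_nsmul_eq_zero.mpr ⟨m * n, Nat.mul_pos hm hn, ?_⟩
      rw [mul_smul]
      exact hma
    exact ⟨⟨a, hfin⟩, by ext; simp [ha]⟩
  · intro a
    constructor
    · intro h
      have := congrArg (Subtype.val) h
      simpa using this
    · intro h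
      ext
      simpa using h
  · exact ⟨(QuotientAddGroup.quotientKerEquivOfSurjective _ (by
      intro b
      obtain ⟨a, ha⟩ := hsurj b
      obtain ⟨n, hn, hnb⟩ := ((isOfFinAddOrder_iff_nsmul_eq_zero).mp b.2)
      have hker' : n • a ∈ s.ker := by
        simp only [AddMonoidHom.mem_ker, map_nsmul, ha]
        exact_mod_cast hnb
      have hfin : IsOfFinAddOrder a := by
        have := hker _ hker'
        obtain ⟨m, hm, hma⟩ := isOfFinAddOrder_iff_nsmul_eq_zero.mp this
        refine isOfFinAddOrder_iff_nsmul_eq_zero.mpr ⟨m * n, Nat.mul_pos hm hn, ?_⟩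
        rw [mul_smul]
        exact hma
      exact ⟨⟨a, hfin⟩, by ext; simp [ha]⟩))⟩
end

section
/- Let M : ℤ³ → ℤ⁴ be the linear map given by the 4×3 integer matrix with rows (1,0,0), (2,1,0), (0,1,0), (0,−1,3). Then the cokernel of M is isomorphic to ℤ ⊕ ℤ/3ℤ. -/
noncomputable def phi3 : (Fin 4 → ℤ) →ₗ[ℤ] ℤ × ZMod 3 where
  toFun v := (v 1 - 2 * v 0 - v 2, ((v 2 + v 3 : ℤ) : ZMod 3))
  map_add' v w := by
    simp only [Pi.add_apply, Prod.mk_add_mk, Prod.mk.injEq]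
    constructor
    · ring
    · push_cast; ring
  map_smul' c v := by
    simp only [Pi.smul_apply, smul_eq_mul, RingHom.id_apply, Prod.smul_mk, Prod.mk.injEq,
      zsmul_eq_mul]
    constructor
    · ring
    · push_cast; ring

lemma phi3_surj : Function.Surjective phi3 := by
  rintro ⟨t, s⟩
  refine ⟨![0, t, 0, (s.val : ℤ)], ?_⟩
  simp only [phi3, LinearMap.coe_mk, AddHom.coe_mk]
  simp [Matrix.cons_val_one, Matrix.head_cons]

lemma phi3_ker : LinearMap.ker phi3 = LinearMap.range
    (Matrix.toLin' (!![1, 0, 0; 2, 1, 0; 0, 1, 0; 0, -1, 3] : Matrix (Fin 4) (Fin 3) ℤ)) := by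
  ext v
  simp only [LinearMap.mem_ker, LinearMap.mem_range, Matrix.toLin'_apply, phi3,
    LinearMap.coe_mk, AddHom.coe_mk, Prod.mk_eq_zero]
  constructor
  · rintro ⟨h1, h2⟩
    rw [ZMod.intCast_zmod_eq_zero_iff_dvd] at h2
    obtain ⟨k, hk⟩ := h2
    refine ⟨![v 0, v 2, k], ?_⟩
    funext i
    fin_cases i <;>
      simp [Matrix.mulVec, dotProduct, Fin.sum_univ_succ] <;> omega
  · rintro ⟨x, rfl⟩
    constructor
    · simp [Matrix.mulVec, dotProduct, Fin.sum_univ_succ]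
    · have : ((!![1, 0, 0; 2, 1, 0; 0, 1, 0; 0, -1, 3] : Matrix (Fin 4) (Fin 3) ℤ).mulVec x 2
          + (!![1, 0, 0; 2, 1, 0; 0, 1, 0; 0, -1, 3] : Matrix (Fin 4) (Fin 3) ℤ).mulVec x 3)
          = 3 * x 2 := by
        simp [Matrix.mulVec, dotProduct, Fin.sum_univ_succ]
      rw [this]
      exact (ZMod.intCast_zmod_eq_zero_iff_dvd _ _).mpr ⟨x 2, rfl⟩

theorem stmt_3 :
    Nonempty (((Fin 4 → ℤ) ⧸ LinearMap.range
      (Matrix.toLin' (!![1, 0, 0; 2, 1, 0; 0, 1, 0; 0, -1, 3] : Matrix (Fin 4) (Fin 3) ℤ)))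
      ≃+ (ℤ × ZMod 3)) := by
  exact ⟨((Submodule.quotEquivOfEq _ _ phi3_ker.symm).trans
    (phi3.quotKerEquivOfSurjective phi3_surj)).toAddEquiv⟩
end
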